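/- arXiv:2008.03416 — 8 statements merged into one kernel-verified Lean document; each statement's English description precedes it below -/
import Mathlib

section
/- Let E and V be finite-dimensional real vector spaces, k ≥ 2, and μ : E → Λ^{k-1}V* a linear map into alternating (k-1)-forms on V. Let Ω be the alternating k-form on E × V defined by Ω((e₁,v₁),…,(e_k,v_k)) = Σ_{j=1}^{k} (−1)^{j+1} μ(e_j)(v₁,…,v̂_j,…,v_k) (hat denotes omission). Then a pair (e,v) ∈ E × V satisfies Ω((e,v),w₂,…,w_k) = 0 for all w₂,…,w_k ∈ E × V if and only if μ(e) = 0 and v ∈ Ker(μ^♯), i.e. μ(e′)(v,v₁,…,v_{k−2}) = 0 for all e′ ∈ E and v₁,…,v_{k−2} ∈ V. In particular Ker(Ω) = Ker(μ) ⊕ Ker(μ^♯). -/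
open scoped BigOperators

/-- With `k = m + 2 ≥ 2`, the alternating `k`-form `Ω` on `E × V` determined by a linear
map `μ : E → Λ^{k-1} V*`:
`Ω((e₁,v₁),…,(e_k,v_k)) = Σ_{j} (−1)^{j+1} μ(e_j)(v₁,…,v̂_j,…,v_k)`
(written with 0-based indices, so the sign is `(−1)^j`). -/
noncomputable def linOmega {E V : Type*} [AddCommGroup E] [Module ℝ E]
    [AddCommGroup V] [Module ℝ V] {m : ℕ}
    (μ : E →ₗ[ℝ] AlternatingMap ℝ V ℝ (Fin (m + 1)))
    (w : Fin (m + 2) → E × V) : ℝ :=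
  ∑ j : Fin (m + 2), (-1 : ℝ) ^ (j : ℕ) * μ (w j).1 (fun i => (w (j.succAbove i)).2)

lemma linOmega_cons {E V : Type*} [AddCommGroup E] [Module ℝ E]
    [AddCommGroup V] [Module ℝ V] {m : ℕ}
    (μ : E →ₗ[ℝ] AlternatingMap ℝ V ℝ (Fin (m + 1))) (e : E) (v : V)
    (ws : Fin (m + 1) → E × V) :
    linOmega μ (Fin.cons (e, v) ws) =
      μ e (fun i => (ws i).2) +
        ∑ i : Fin (m + 1), (-1 : ℝ) ^ ((i : ℕ) + 1) *
          μ (ws i).1 (Fin.cons v fun l => (ws (i.succAbove l)).2) := by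
  rw [linOmega, Fin.sum_univ_succ]
  congr 1
  · simp
  · apply Finset.sum_congr rfl
    intro i _
    have harg : (fun l => ((Fin.cons (e, v) ws : Fin (m+2) → E × V) (i.succ.succAbove l)).2)
        = Fin.cons v fun l => (ws (i.succAbove l)).2 := by
      funext l
      refine Fin.cases ?_ (fun l' => ?_) l
      · simp [Fin.succAbove_zero, Fin.succ_succAbove_zero]
      · simp [Fin.succ_succAbove_succ]
    simp [harg]

/-- `(e,v)` lies in the kernel of `Ω` (i.e. `Ω((e,v),w₂,…,w_k) = 0` for all
`w₂,…,w_k ∈ E × V`) iff `μ(e) = 0` and `v ∈ Ker(μ^♯)`, i.e.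
`μ(e′)(v,v₁,…,v_{k−2}) = 0` for all `e′` and `v₁,…,v_{k−2}`.
In particular `Ker(Ω) = Ker(μ) ⊕ Ker(μ^♯)`. -/
theorem statement0 {E V : Type*} [AddCommGroup E] [Module ℝ E] [FiniteDimensional ℝ E]
    [AddCommGroup V] [Module ℝ V] [FiniteDimensional ℝ V] (m : ℕ)
    (μ : E →ₗ[ℝ] AlternatingMap ℝ V ℝ (Fin (m + 1))) (e : E) (v : V) :
    (∀ ws : Fin (m + 1) → E × V, linOmega μ (Fin.cons (e, v) ws) = 0) ↔
      (μ e = 0 ∧ ∀ (e' : E) (vs : Fin m → V), μ e' (Fin.cons v vs) = 0) := by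
  constructor
  · intro h
    have hμe : μ e = 0 := by
      ext vs
      have := h (fun i => (0, vs i))
      rw [linOmega_cons] at this
      simpa using this
    refine ⟨hμe, fun e' vs => ?_⟩
    have := h (Fin.cons (e', 0) (fun i => (0, vs i)))
    rw [linOmega_cons, Fin.sum_univ_succ] at this
    have harg : (Fin.cons v fun l =>
        ((Fin.cons (e',(0:V)) (fun i => ((0:E), vs i)) : Fin (m+1) → E × V)
          ((0 : Fin (m+1)).succAbove l)).2) = (Fin.cons v vs : Fin (m+1) → V) := by
      funext l
      refine Fin.cases ?_ (fun l' => ?_) l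
      · simp
      · simp
    rw [harg] at this
    simp [hμe] at this
    exact this
  · rintro ⟨hμe, hker⟩ ws
    rw [linOmega_cons, hμe]
    simp [hker]
end

section
/- Let E and V be finite-dimensional real vector spaces, k ≥ 2, and let μ : E → Λ^{k-1}V* and θ : E → Λ^{k}V* be linear maps into alternating forms on V. For u ∈ E let ω_u be the alternating k-form on E × V defined by ω_u((e₁,v₁),…,(e_k,v_k)) = Σ_{j=1}^{k} (−1)^{j+1} μ(e_j)(v₁,…,v̂_j,…,v_k) + θ(u)(v₁,…,v_k). Then (e,v) ∈ Ker(ω_u) if and only if: (i) μ(e′)(v,v₁,…,v_{k−2}) = 0 for all e′ ∈ E and v₁,…,v_{k−2} ∈ V, and (ii) μ(e) + i_v θ(u) = 0 as alternating (k−1)-forms on V, where i_v θ(u) denotes the contraction (v₁,…,v_{k−1}) ↦ θ(u)(v,v₁,…,v_{k−1}). -/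
open scoped BigOperators

/-- With `k = m + 2 ≥ 2`, the alternating `k`-form `ω_u` on `E × V` determined by linear
maps `μ : E → Λ^{k-1} V*`, `θ : E → Λ^{k} V*` and a point `u ∈ E`:
`ω_u((e₁,v₁),…,(e_k,v_k)) = Σ_{j} (−1)^{j+1} μ(e_j)(v₁,…,v̂_j,…,v_k) + θ(u)(v₁,…,v_k)`
(written with 0-based indices, so the sign is `(−1)^j`). -/
noncomputable def linOmegaU {E V : Type*} [AddCommGroup E] [Module ℝ E]
    [AddCommGroup V] [Module ℝ V] {m : ℕ}
    (μ : E →ₗ[ℝ] AlternatingMap ℝ V ℝ (Fin (m + 1)))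
    (θ : E →ₗ[ℝ] AlternatingMap ℝ V ℝ (Fin (m + 2))) (u : E)
    (w : Fin (m + 2) → E × V) : ℝ :=
  (∑ j : Fin (m + 2), (-1 : ℝ) ^ (j : ℕ) * μ (w j).1 (fun i => (w (j.succAbove i)).2))
    + θ u (fun j => (w j).2)

lemma linOmegaU_cons {E V : Type*} [AddCommGroup E] [Module ℝ E]
    [AddCommGroup V] [Module ℝ V] {m : ℕ}
    (μ : E →ₗ[ℝ] AlternatingMap ℝ V ℝ (Fin (m + 1)))
    (θ : E →ₗ[ℝ] AlternatingMap ℝ V ℝ (Fin (m + 2))) (u : E) (e : E) (v : V)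
    (ws : Fin (m + 1) → E × V) :
    linOmegaU μ θ u (Fin.cons (e, v) ws)
      = μ e (fun i => (ws i).2)
        + (∑ j : Fin (m + 1), (-1 : ℝ) ^ ((j : ℕ) + 1) *
            μ (ws j).1 (Fin.cons v (fun i => (ws (j.succAbove i)).2)))
        + θ u (Fin.cons v (fun i => (ws i).2)) := by
  unfold linOmegaU
  rw [Fin.sum_univ_succ]
  have h0 : (fun i => ((Fin.cons (e, v) ws : Fin (m+2) → E × V)
      ((0 : Fin (m+2)).succAbove i)).2) = fun i => (ws i).2 := by
    funext i
    simp [Fin.succAbove]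
  have hlast : (fun j => ((Fin.cons (e, v) ws : Fin (m+2) → E × V) j).2)
      = Fin.cons v (fun i => (ws i).2) := by
    funext j
    refine Fin.cases ?_ (fun i => ?_) j <;> simp
  have hsum : ∀ j : Fin (m+1),
      (fun i => ((Fin.cons (e, v) ws : Fin (m+2) → E × V) ((j.succ).succAbove i)).2)
        = Fin.cons v (fun i => (ws (j.succAbove i)).2) := by
    intro j
    funext i
    refine Fin.cases ?_ (fun i' => ?_) i
    · simp [Fin.succ_succAbove_zero]
    · simp [Fin.succ_succAbove_succ]
  simp only [Fin.cons_zero, Fin.cons_succ, Fin.val_zero, pow_zero, one_mul, h0, hlast]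
  congr 2
  refine Finset.sum_congr rfl (fun j _ => ?_)
  rw [hsum j]
  simp

/-- `(e,v) ∈ Ker(ω_u)` iff
(i) `μ(e′)(v,v₁,…,v_{k−2}) = 0` for all `e′ ∈ E`, `v₁,…,v_{k−2} ∈ V`, and
(ii) `μ(e) + i_v θ(u) = 0` as alternating `(k−1)`-forms on `V`. -/
theorem statement1 {E V : Type*} [AddCommGroup E] [Module ℝ E] [FiniteDimensional ℝ E]
    [AddCommGroup V] [Module ℝ V] [FiniteDimensional ℝ V] (m : ℕ)
    (μ : E →ₗ[ℝ] AlternatingMap ℝ V ℝ (Fin (m + 1)))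
    (θ : E →ₗ[ℝ] AlternatingMap ℝ V ℝ (Fin (m + 2))) (u : E) (e : E) (v : V) :
    (∀ ws : Fin (m + 1) → E × V, linOmegaU μ θ u (Fin.cons (e, v) ws) = 0) ↔
      ((∀ (e' : E) (vs : Fin m → V), μ e' (Fin.cons v vs) = 0) ∧
        ∀ vs : Fin (m + 1) → V, μ e vs + θ u (Fin.cons v vs) = 0) := by
  constructor
  · intro h
    constructor
    · intro e' vs
      set ws : Fin (m + 1) → E × V := Fin.cons (e', 0) (fun i => (0, vs i)) with hws
      have H := h ws
      rw [linOmegaU_cons] at H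
      have t1 : μ e (fun i => (ws i).2) = 0 := by
        apply (μ e).map_coord_zero 0
        simp [hws]
      have t3 : θ u (Fin.cons v (fun i => (ws i).2)) = 0 := by
        apply (θ u).map_coord_zero 1
        have : (Fin.cons v (fun i => (ws i).2) : Fin (m+2) → V) 1
            = (ws 0).2 := by
          rw [show (1 : Fin (m+2)) = Fin.succ 0 from rfl, Fin.cons_succ]
        rw [this]; simp [hws]
      have t2 : (∑ j : Fin (m + 1), (-1 : ℝ) ^ ((j : ℕ) + 1) *
            μ (ws j).1 (Fin.cons v (fun i => (ws (j.succAbove i)).2)))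
          = - μ e' (Fin.cons v vs) := by
        rw [Fin.sum_univ_succ]
        have e0 : (fun i => (ws ((0 : Fin (m+1)).succAbove i)).2) = vs := by
          funext i
          simp [hws, Fin.succAbove]
        have erest : ∀ j : Fin m, (-1 : ℝ) ^ ((j.succ : ℕ) + 1) *
            μ (ws j.succ).1 (Fin.cons v (fun i => (ws (j.succ.succAbove i)).2)) = 0 := by
          intro j
          simp [hws]
        rw [Finset.sum_congr rfl (fun j _ => erest j)]
        simp [hws, e0]
      rw [t1, t2, t3] at H
      linarith
    · intro vs
      have H := h (fun i => (0, vs i))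
      rw [linOmegaU_cons] at H
      simpa using H
  · rintro ⟨h1, h2⟩ ws
    rw [linOmegaU_cons]
    have t2 : (∑ j : Fin (m + 1), (-1 : ℝ) ^ ((j : ℕ) + 1) *
          μ (ws j).1 (Fin.cons v (fun i => (ws (j.succAbove i)).2))) = 0 := by
      refine Finset.sum_eq_zero (fun j _ => ?_)
      rw [h1 (ws j).1 (fun i => (ws (j.succAbove i)).2), mul_zero]
    rw [t2, add_zero]
    exact h2 (fun i => (ws i).2)
end

section
/- Let E and V be finite-dimensional real vector spaces with dim E = dim V, ρ : E → V and μ : E → V* linear maps satisfying the skewness condition μ(e₁)(ρ(e₂)) = −μ(e₂)(ρ(e₁)) for all e₁, e₂ ∈ E, and Ker(μ) ∩ Ker(ρ) = 0. Then the subspace L := { (ρ(e), μ(e)) : e ∈ E } of V × V* is Lagrangian with respect to the symmetric pairing ⟨(X,α),(Y,β)⟩ = α(Y) + β(X); that is, L = L^⊥ := { w ∈ V × V* : ⟨w,ℓ⟩ = 0 for all ℓ ∈ L }. -/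
/-!
The pairing on `V × V*` is nondegenerate, so `dim L^⊥ = 2 dim V - dim L`; hence an isotropic
subspace `L ⊆ L^⊥` of dimension `dim V` equals `L^⊥`. The skewness condition says exactly that
`L` is isotropic, and the kernel condition makes `e ↦ (ρ e, μ e)` injective, so that
`dim L = dim E = dim V`.
-/

open Module LinearMap
open LinearMap (BilinForm)

namespace LinearMap.BilinForm

variable {K W : Type*} [Field K] [AddCommGroup W] [Module K W] [FiniteDimensional K W]

theorem orthogonal_eq_of_le_orthogonal {B : BilinForm K W} (hB : B.Nondegenerate)
    {L : Submodule K W} (hL : L ≤ B.orthogonal L) (hdim : finrank K W = 2 * finrank K L) :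
    B.orthogonal L = L :=
  (Submodule.eq_of_le_of_finrank_le hL (by rw [finrank_orthogonal hB]; omega)).symm

end LinearMap.BilinForm

section SymmetricPairing

variable (R M : Type*) [CommRing R] [AddCommGroup M] [Module R M]

/-- `LinearMap.dualProd`, which lives on `M* × M`, transported to `M × M*`. -/
def symmetricPairing : BilinForm R (M × Dual R M) :=
  BilinForm.congr (LinearEquiv.prodComm R (Dual R M) M) (dualProd R M)

variable {R M}

@[simp]
theorem symmetricPairing_apply (x y : M × Dual R M) :
    symmetricPairing R M x y = x.2 y.1 + y.2 x.1 :=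
  add_comm _ _

theorem symmetricPairing_nondegenerate [Projective R M] :
    (symmetricPairing R M).Nondegenerate :=
  .congr _ <| (isSymm_dualProd R M).isRefl.nondegenerate_iff_separatingLeft.2 <|
    (separatingLeft_dualProd R M).2 (eval_apply_injective R)

theorem range_prod_le_orthogonal {E : Type*} [AddCommGroup E] [Module R E]
    {ρ : E →ₗ[R] M} {μ : E →ₗ[R] Dual R M} (hskew : ∀ e₁ e₂ : E, μ e₁ (ρ e₂) = -μ e₂ (ρ e₁)) :
    range (ρ.prod μ) ≤ (symmetricPairing R M).orthogonal (range (ρ.prod μ)) := by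
  rintro _ ⟨e, rfl⟩ _ ⟨e', rfl⟩
  simp [hskew e']

end SymmetricPairing

theorem finrank_prod_dual (K V : Type*) [Field K] [AddCommGroup V] [Module K V]
    [FiniteDimensional K V] : finrank K (V × Dual K V) = 2 * finrank K V := by
  rw [finrank_prod, Subspace.dual_finrank_eq, two_mul]

theorem finrank_range_prod_of_ker_inf_ker_eq_bot {K E V W : Type*} [Field K] [AddCommGroup E]
    [Module K E] [AddCommGroup V] [Module K V] [AddCommGroup W] [Module K W]
    {f : E →ₗ[K] V} {g : E →ₗ[K] W} (h : ker f ⊓ ker g = ⊥) :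
    finrank K (range (f.prod g)) = finrank K E :=
  finrank_range_of_inj <| ker_eq_bot.1 <| by rw [ker_prod, h]

theorem statement5_general {E V : Type*} [AddCommGroup E] [Module ℝ E]
    [AddCommGroup V] [Module ℝ V] [FiniteDimensional ℝ V]
    (hdim : Module.finrank ℝ E = Module.finrank ℝ V)
    (ρ : E →ₗ[ℝ] V) (μ : E →ₗ[ℝ] Module.Dual ℝ V)
    (hskew : ∀ e₁ e₂ : E, μ e₁ (ρ e₂) = - μ e₂ (ρ e₁))
    (hnd : LinearMap.ker μ ⊓ LinearMap.ker ρ = ⊥) :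
    ∀ w : V × Module.Dual ℝ V,
      w ∈ LinearMap.range (ρ.prod μ) ↔
        ∀ ℓ ∈ LinearMap.range (ρ.prod μ), w.2 ℓ.1 + ℓ.2 w.1 = 0 := by
  have hLagrangian :
      (symmetricPairing ℝ V).orthogonal (range (ρ.prod μ)) = range (ρ.prod μ) := by
    refine BilinForm.orthogonal_eq_of_le_orthogonal
      (symmetricPairing_nondegenerate (R := ℝ) (M := V)) (range_prod_le_orthogonal hskew) ?_
    rw [finrank_prod_dual, finrank_range_prod_of_ker_inf_ker_eq_bot ((inf_comm _ _).trans hnd),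
      hdim]
  intro w
  conv_lhs => rw [← hLagrangian]
  exact forall₂_congr fun ℓ _ => by rw [symmetricPairing_apply, add_comm]

/-- let `dim E = dim V`, `ρ : E → V`, `μ : E → V*` linear with
`μ(e₁)(ρ(e₂)) = −μ(e₂)(ρ(e₁))` and `Ker(μ) ∩ Ker(ρ) = 0`.  Then
`L = { (ρ(e), μ(e)) : e ∈ E } ⊆ V × V*` is Lagrangian for the symmetric pairing
`⟨(X,α),(Y,β)⟩ = α(Y) + β(X)`, i.e. `L = L^⊥`. -/
theorem statement5 {E V : Type*} [AddCommGroup E] [Module ℝ E] [FiniteDimensional ℝ E]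
    [AddCommGroup V] [Module ℝ V] [FiniteDimensional ℝ V]
    (hdim : Module.finrank ℝ E = Module.finrank ℝ V)
    (ρ : E →ₗ[ℝ] V) (μ : E →ₗ[ℝ] Module.Dual ℝ V)
    (hskew : ∀ e₁ e₂ : E, μ e₁ (ρ e₂) = - μ e₂ (ρ e₁))
    (hnd : LinearMap.ker μ ⊓ LinearMap.ker ρ = ⊥) :
    ∀ w : V × Module.Dual ℝ V,
      w ∈ LinearMap.range (ρ.prod μ) ↔
        ∀ ℓ ∈ LinearMap.range (ρ.prod μ), w.2 ℓ.1 + ℓ.2 w.1 = 0 :=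
  statement5_general hdim ρ μ hskew hnd
end

section
/- Let E, Ẽ, V, Ṽ be finite-dimensional real vector spaces, q : E → Ẽ and p : V → Ṽ surjective linear maps, ρ : E → V and ρ̃ : Ẽ → Ṽ linear maps with ρ̃ ∘ q = p ∘ ρ, and μ̃ : Ẽ → Ṽ* a linear map; define μ : E → V* by μ(e) := μ̃(q(e)) ∘ p (the pullback of μ̃(q(e)) along p). Set K := Ker(q). Then the following are equivalent: (a) dim Ẽ = dim Ṽ and Ker(μ̃) ∩ Ker(ρ̃) = 0; (b) dim K = dim E − dim Ṽ and K = Ker(μ) ∩ ρ⁻¹(Ker(p)). -/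
/-- let `q : E → Ẽ`, `p : V → Ṽ` be surjective linear maps,
`ρ : E → V`, `ρ̃ : Ẽ → Ṽ` with `ρ̃ ∘ q = p ∘ ρ`, and `μ̃ : Ẽ → Ṽ*`; set
`μ(e) := μ̃(q(e)) ∘ p` (i.e. `μ = p.dualMap ∘ μ̃ ∘ q`) and `K := Ker(q)`.  Then
`(dim Ẽ = dim Ṽ ∧ Ker(μ̃) ∩ Ker(ρ̃) = 0)` iff
`(dim K = dim E − dim Ṽ ∧ K = Ker(μ) ∩ ρ⁻¹(Ker(p)))`
(the dimension equation is stated over `ℤ` to avoid truncated subtraction). -/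
theorem statement8 {E Et V Vt : Type*}
    [AddCommGroup E] [Module ℝ E] [FiniteDimensional ℝ E]
    [AddCommGroup Et] [Module ℝ Et] [FiniteDimensional ℝ Et]
    [AddCommGroup V] [Module ℝ V] [FiniteDimensional ℝ V]
    [AddCommGroup Vt] [Module ℝ Vt] [FiniteDimensional ℝ Vt]
    (q : E →ₗ[ℝ] Et) (hq : Function.Surjective q)
    (p : V →ₗ[ℝ] Vt) (hp : Function.Surjective p)
    (ρ : E →ₗ[ℝ] V) (ρt : Et →ₗ[ℝ] Vt) (hcomm : ρt ∘ₗ q = p ∘ₗ ρ)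
    (μt : Et →ₗ[ℝ] Module.Dual ℝ Vt) :
    (Module.finrank ℝ Et = Module.finrank ℝ Vt ∧
        LinearMap.ker μt ⊓ LinearMap.ker ρt = ⊥) ↔
      ((Module.finrank ℝ (LinearMap.ker q) : ℤ) =
          (Module.finrank ℝ E : ℤ) - (Module.finrank ℝ Vt : ℤ) ∧
        LinearMap.ker q =
          LinearMap.ker (p.dualMap ∘ₗ μt ∘ₗ q) ⊓ Submodule.comap ρ (LinearMap.ker p)) := by
  -- rank-nullity for q
  have hrn : Module.finrank ℝ Et + Module.finrank ℝ (LinearMap.ker q)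
      = Module.finrank ℝ E := by
    have := LinearMap.finrank_range_add_finrank_ker q
    rwa [LinearMap.range_eq_top.mpr hq, finrank_top] at this
  -- p.dualMap is injective
  have hdual : LinearMap.ker p.dualMap = ⊥ := by
    rw [LinearMap.ker_eq_bot]
    intro φ ψ h
    ext v
    obtain ⟨w, rfl⟩ := hp v
    exact congrArg (fun f => f w) (congrArg DFunLike.coe h)
  -- ker μ = q⁻¹(ker μt)
  have hkerμ : LinearMap.ker (p.dualMap ∘ₗ μt ∘ₗ q)
      = Submodule.comap q (LinearMap.ker μt) := by
    rw [LinearMap.ker_comp, hdual, Submodule.comap_bot, LinearMap.ker_comp]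
  -- ρ⁻¹(ker p) = q⁻¹(ker ρt)
  have hρ : Submodule.comap ρ (LinearMap.ker p) = Submodule.comap q (LinearMap.ker ρt) := by
    rw [← LinearMap.ker_comp, ← hcomm, LinearMap.ker_comp]
  have hinj : Function.Injective (Submodule.comap q) :=
    Submodule.comap_injective_of_surjective hq
  constructor
  · rintro ⟨hd, hk⟩
    refine ⟨by omega, ?_⟩
    rw [hkerμ, hρ, ← Submodule.comap_inf, hk, Submodule.comap_bot]
  · rintro ⟨hd, hk⟩
    rw [hkerμ, hρ, ← Submodule.comap_inf] at hk
    refine ⟨by omega, ?_⟩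
    apply hinj
    rw [Submodule.comap_bot, ← hk]
end

section
/- Let E and V be finite-dimensional real vector spaces, k ≥ 2, and let μ : E → Λ^{k-1}V* and θ : E → Λ^{k}V* be linear maps into alternating forms on V. For u ∈ E let ω_u be the alternating k-form on E × V defined by ω_u((e₁,v₁),…,(e_k,v_k)) = Σ_{j=1}^{k} (−1)^{j+1} μ(e_j)(v₁,…,v̂_j,…,v_k) + θ(u)(v₁,…,v_k). Then Ker(ω_u) = 0 for every u ∈ E if and only if μ is injective and Ker(μ^♯) = 0 (i.e. the only v ∈ V with μ(e′)(v,v₁,…,v_{k−2}) = 0 for all e′ ∈ E and all v₁,…,v_{k−2} ∈ V is v = 0). -/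
open scoped BigOperators

/-- `Ker(ω_u) = 0` for every `u ∈ E` iff `μ` is injective and
`Ker(μ^♯) = 0`, i.e. the only `v ∈ V` with `μ(e′)(v,v₁,…,v_{k−2}) = 0` for all `e′` and
all `v₁,…,v_{k−2}` is `v = 0`. -/
theorem statement10 {E V : Type*} [AddCommGroup E] [Module ℝ E] [FiniteDimensional ℝ E]
    [AddCommGroup V] [Module ℝ V] [FiniteDimensional ℝ V] (m : ℕ)
    (μ : E →ₗ[ℝ] AlternatingMap ℝ V ℝ (Fin (m + 1)))
    (θ : E →ₗ[ℝ] AlternatingMap ℝ V ℝ (Fin (m + 2))) :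
    (∀ u : E, ∀ p : E × V,
        (∀ ws : Fin (m + 1) → E × V, linOmegaU μ θ u (Fin.cons p ws) = 0) → p = 0) ↔
      (Function.Injective μ ∧
        ∀ v : V, (∀ (e' : E) (vs : Fin m → V), μ e' (Fin.cons v vs) = 0) → v = 0) := by
  constructor
  · intro h
    refine ⟨?_, ?_⟩
    · rw [injective_iff_map_eq_zero]
      intro e he
      have hp : (e, (0 : V)) = 0 := by
        apply h 0
        intro ws
        unfold linOmegaU
        rw [map_zero, AlternatingMap.zero_apply, add_zero]
        apply Finset.sum_eq_zero
        intro j _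
        rw [mul_eq_zero]; right
        rcases eq_or_ne j 0 with rfl | hj
        · simp [he]
        · apply AlternatingMap.map_coord_zero _ 0
          rw [Fin.succAbove_ne_zero_zero hj]
          simp
      simpa using congrArg Prod.fst hp
    · intro v hv
      have hp : ((0 : E), v) = 0 := by
        apply h 0
        intro ws
        unfold linOmegaU
        rw [map_zero, AlternatingMap.zero_apply, add_zero]
        apply Finset.sum_eq_zero
        intro j _
        rw [mul_eq_zero]; right
        rcases eq_or_ne j 0 with rfl | hj
        · simp
        · set f : Fin (m + 1) → V :=
            fun i => ((Fin.cons ((0 : E), v) ws : Fin (m + 2) → E × V) (j.succAbove i)).2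
            with hf
          have h0 : f 0 = v := by
            rw [hf]; simp [Fin.succAbove_ne_zero_zero hj]
          have hft : f = Fin.cons v (Fin.tail f) := by
            rw [← h0, Fin.cons_self_tail]
          rw [hft]
          exact hv _ _
      simpa using congrArg Prod.snd hp
  · rintro ⟨hinj, hker⟩ u ⟨e, v⟩ hw
    have hv : v = 0 := by
      apply hker
      intro e' vs
      have h1 := hw (Fin.cons (e', 0) fun j => ((0 : E), vs j))
      unfold linOmegaU at h1
      set W : Fin (m + 2) → E × V :=
        Fin.cons (e, v) (Fin.cons (e', 0) fun j => ((0 : E), vs j)) with hW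
      rw [Fin.sum_univ_succ, Fin.sum_univ_succ] at h1
      have t0 : ((-1 : ℝ) ^ ((0 : Fin (m + 2)) : ℕ) *
          μ (W 0).1 fun i => (W ((0 : Fin (m + 2)).succAbove i)).2) = 0 := by
        rw [mul_eq_zero]; right
        apply AlternatingMap.map_coord_zero _ 0
        rw [Fin.zero_succAbove]
        simp [hW]
      have tθ : (θ u fun j => (W j).2) = 0 := by
        apply AlternatingMap.map_coord_zero _ (Fin.succ (0 : Fin (m + 1)))
        simp [hW]
      have ttail : ∀ t : Fin m, ((-1 : ℝ) ^ ((t.succ.succ : Fin (m + 2)) : ℕ) *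
          μ (W t.succ.succ).1 fun i => (W (t.succ.succ.succAbove i)).2) = 0 := by
        intro t
        rw [mul_eq_zero]; right
        have hW2 : (W t.succ.succ).1 = 0 := by simp [hW]
        rw [hW2, map_zero]
        simp
      rw [t0, tθ, Finset.sum_eq_zero (fun t _ => ttail t)] at h1
      have harg : (fun i => (W ((Fin.succ (0 : Fin (m + 1))).succAbove i)).2)
          = Fin.cons v vs := by
        funext i
        induction i using Fin.cases with
        | zero =>
          rw [Fin.succAbove_ne_zero_zero (Fin.succ_ne_zero _)]
          simp [hW]
        | succ t =>
          rw [Fin.succ_succAbove_succ, Fin.zero_succAbove]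
          simp [hW]
      rw [harg] at h1
      have hw1 : (W (Fin.succ (0 : Fin (m + 1)))).1 = e' := by simp [hW]
      rw [hw1] at h1
      have hpow : ((-1 : ℝ) ^ ((Fin.succ (0 : Fin (m + 1)) : Fin (m + 2)) : ℕ)) = -1 := by
        simp
      rw [hpow] at h1
      linarith
    subst hv
    have he : e = 0 := by
      apply hinj
      rw [map_zero]
      ext vS
      have h1 := hw (fun j => ((0 : E), vS j))
      unfold linOmegaU at h1
      set W : Fin (m + 2) → E × V := Fin.cons (e, (0 : V)) (fun j => ((0 : E), vS j)) with hW
      rw [Fin.sum_univ_succ] at h1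
      have tθ : (θ u fun j => (W j).2) = 0 := by
        apply AlternatingMap.map_coord_zero _ (0 : Fin (m + 2))
        simp [hW]
      have ttail : ∀ t : Fin (m + 1), ((-1 : ℝ) ^ ((t.succ : Fin (m + 2)) : ℕ) *
          μ (W t.succ).1 fun i => (W (t.succ.succAbove i)).2) = 0 := by
        intro t
        rw [mul_eq_zero]; right
        have hW2 : (W t.succ).1 = 0 := by simp [hW]
        rw [hW2, map_zero]
        simp
      rw [tθ, Finset.sum_eq_zero (fun t _ => ttail t)] at h1
      have harg : (fun i => (W ((0 : Fin (m + 2)).succAbove i)).2) = vS := by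
        funext i
        rw [Fin.zero_succAbove]
        simp [hW]
      rw [harg] at h1
      have hW0 : (W 0).1 = e := by simp [hW]
      rw [hW0] at h1
      simpa using h1
    simp [he]
end

section
/- Let G be a Lie group modeled on a finite-dimensional real normed space (model with corners I), F : G → ℝ a smooth map satisfying F(g·h) = F(g) + F(h) for all g, h ∈ G, and γ : ℝ → G a smooth curve. Then for all t ∈ ℝ, F(γ(t)) = F(γ(0)) + ∫_0^t ξ( dR_{γ(s)⁻¹}( γ'(s) ) ) ds, where ξ := mfderiv I 𝓘(ℝ,ℝ) F 1 is the differential of F at the identity, γ'(s) := (mfderiv 𝓘(ℝ,ℝ) I γ s)(1) is the tangent vector of the curve at s, and dR_{γ(s)⁻¹} := mfderiv I I (fun x => x * γ(s)⁻¹) (γ(s)) is the differential of right translation by γ(s)⁻¹ at γ(s). -/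
open scoped Manifold

/-!
Additivity gives `F = F ∘ R_{g⁻¹} + F g`, so the differential of `F` at any point `g` is the
differential `ξ` at the identity composed with `dR_{g⁻¹}`. Along `γ` the chain rule then
identifies the integrand with the derivative of `F ∘ γ`, and the fundamental theorem of
calculus concludes.
-/

section

variable {EG : Type*} [NormedAddCommGroup EG] [NormedSpace ℝ EG]
  {H : Type*} [TopologicalSpace H] {I : ModelWithCorners ℝ EG H}
  {G : Type*} [TopologicalSpace G] [ChartedSpace H G] [Group G]
  {n : WithTop ℕ∞} [LieGroup I n G]
  {E : Type*} [NormedAddCommGroup E] [NormedSpace ℝ E]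

theorem hasMFDerivAt_of_map_mul_eq_add (hn : n ≠ 0) {F : G → E}
    (hF : MDifferentiableAt I 𝓘(ℝ, E) F 1) (hadd : ∀ g h : G, F (g * h) = F g + F h) (g : G) :
    HasMFDerivAt I 𝓘(ℝ, E) F g
      ((mfderiv I 𝓘(ℝ, E) F 1).comp (mfderiv I I (fun x => x * g⁻¹) g)) := by
  have hR : HasMFDerivAt I I (fun x : G => x * g⁻¹) g (mfderiv I I (fun x : G => x * g⁻¹) g) :=
    ((contMDiff_mul_right (I := I) (n := n)).mdifferentiableAt hn).hasMFDerivAt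
  have hF1 : HasMFDerivAt I 𝓘(ℝ, E) F (g * g⁻¹) (mfderiv I 𝓘(ℝ, E) F 1) := by
    rw [mul_inv_cancel]
    exact hF.hasMFDerivAt
  have hsplit : (F ∘ fun x => x * g⁻¹) + (fun _ => F g) = F := by
    funext x
    simp only [Pi.add_apply, Function.comp_apply, ← hadd, inv_mul_cancel_right]
  have hcomp := (hF1.comp g hR).add (hasMFDerivAt_const (I := I) (I' := 𝓘(ℝ, E)) (F g) g)
  rw [hsplit] at hcomp
  exact hcomp.congr_mfderiv (add_zero _)

-- `show E from` retypes the tangent vector, whose type `TangentSpace 𝓘(ℝ, E) _` does not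
-- carry the normed-space instances `HasDerivAt` needs.
theorem hasDerivAt_comp_of_map_mul_eq_add (hn : n ≠ 0) {F : G → E}
    (hF : MDifferentiableAt I 𝓘(ℝ, E) F 1) (hadd : ∀ g h : G, F (g * h) = F g + F h)
    {γ : ℝ → G} {s : ℝ} (hγ : MDifferentiableAt 𝓘(ℝ, ℝ) I γ s) :
    HasDerivAt (F ∘ γ)
      (show E from mfderiv I 𝓘(ℝ, E) F 1
        (mfderiv I I (fun x => x * (γ s)⁻¹) (γ s) (mfderiv 𝓘(ℝ, ℝ) I γ s 1))) s := by
  have hchain := (hasMFDerivAt_of_map_mul_eq_add hn hF hadd (γ s)).comp s hγ.hasMFDerivAt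
  exact (show HasFDerivAt (F ∘ γ) (_ : ℝ →L[ℝ] E) s from hasMFDerivAt_iff_hasFDerivAt.mp hchain).hasDerivAt

end

theorem statement12_general {EG : Type*} [NormedAddCommGroup EG] [NormedSpace ℝ EG]
    {H : Type*} [TopologicalSpace H] {I : ModelWithCorners ℝ EG H}
    {G : Type*} [TopologicalSpace G] [ChartedSpace H G] [Group G] [LieGroup I (⊤ : ℕ∞) G]
    (F : G → ℝ) (hF : ContMDiff I 𝓘(ℝ, ℝ) (⊤ : ℕ∞) F)
    (hadd : ∀ g h : G, F (g * h) = F g + F h)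
    (γ : ℝ → G) (hγ : ContMDiff 𝓘(ℝ, ℝ) I (⊤ : ℕ∞) γ) :
    ∀ t : ℝ,
      F (γ t) = F (γ 0) +
        ∫ s in (0 : ℝ)..t,
          (show ℝ from
            mfderiv I 𝓘(ℝ, ℝ) F 1
              (mfderiv I I (fun x => x * (γ s)⁻¹) (γ s)
                (mfderiv 𝓘(ℝ, ℝ) I γ s (1 : ℝ)))) := by
  intro t
  have hderiv (s : ℝ) := hasDerivAt_comp_of_map_mul_eq_add (n := (⊤ : ℕ∞)) (by simp)
    (hF.mdifferentiableAt (by simp)) hadd (hγ.mdifferentiableAt (by simp) (x := s))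
  have hcontDiff : ContDiff ℝ 1 (F ∘ γ) :=
    contMDiff_iff_contDiff.mp ((hF.comp hγ).of_le (by exact_mod_cast le_top))
  have hcont := hcontDiff.continuous_deriv le_rfl
  rw [funext fun s => (hderiv s).deriv] at hcont
  have hftc := intervalIntegral.integral_eq_sub_of_hasDerivAt (fun s _ => hderiv s)
    (hcont.intervalIntegrable 0 t)
  exact (add_sub_cancel (F (γ 0)) (F (γ t))).symm.trans (congrArg _ hftc.symm)

/-- let `G` be a Lie group modeled on a finite-dimensional real normed
space (model with corners `I`), `F : G → ℝ` smooth with `F(g·h) = F(g) + F(h)`, and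
`γ : ℝ → G` a smooth curve.  Then for all `t`,
`F(γ(t)) = F(γ(0)) + ∫_0^t ξ(dR_{γ(s)⁻¹}(γ'(s))) ds`,
where `ξ = mfderiv I 𝓘(ℝ,ℝ) F 1`, `γ'(s) = (mfderiv 𝓘(ℝ,ℝ) I γ s) 1`, and
`dR_{γ(s)⁻¹} = mfderiv I I (fun x => x * γ(s)⁻¹) (γ(s))`. -/
theorem statement12 {EG : Type*} [NormedAddCommGroup EG] [NormedSpace ℝ EG]
    [FiniteDimensional ℝ EG]
    {H : Type*} [TopologicalSpace H] {I : ModelWithCorners ℝ EG H}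
    {G : Type*} [TopologicalSpace G] [ChartedSpace H G] [Group G] [LieGroup I (⊤ : ℕ∞) G]
    (F : G → ℝ) (hF : ContMDiff I 𝓘(ℝ, ℝ) (⊤ : ℕ∞) F)
    (hadd : ∀ g h : G, F (g * h) = F g + F h)
    (γ : ℝ → G) (hγ : ContMDiff 𝓘(ℝ, ℝ) I (⊤ : ℕ∞) γ) :
    ∀ t : ℝ,
      F (γ t) = F (γ 0) +
        ∫ s in (0 : ℝ)..t,
          (show ℝ from
            mfderiv I 𝓘(ℝ, ℝ) F 1
              (mfderiv I I (fun x => x * (γ s)⁻¹) (γ s)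
                (mfderiv 𝓘(ℝ, ℝ) I γ s (1 : ℝ)))) :=
  statement12_general F hF hadd γ hγ
end

section
/- Let M and N be smooth finite-dimensional manifolds (without boundary, modeled on finite-dimensional real normed spaces with models with corners I and I′), and let q : M → N be a smooth map which is a submersion, i.e. mfderiv I I′ q x : T_xM → T_{q(x)}N is surjective for every x ∈ M, and whose fibers q⁻¹{y} are connected subsets of M for every y ∈ N. Let f : M → ℝ be a smooth function which is infinitesimally q-invariant in the sense that (mfderiv I 𝓘(ℝ,ℝ) f x)(v) = 0 for every x ∈ M and every v ∈ ker(mfderiv I I′ q x). Then f is constant along the fibers of q: for all x, y ∈ M, q(x) = q(y) implies f(x) = f(y). -/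
/-!
Near a point `a`, the implicit function theorem applied to `q` in charts parametrizes the fiber
through `a` by a differentiable map `c` from a ball in `ker (mfderiv q a)`. As `q ∘ c` is
constant, `mfderiv c` takes values in `ker (mfderiv q)`, so `f ∘ c` has zero derivative and `f`
is constant on a neighbourhood of `a` in its fiber. Being locally constant on a preconnected
fiber, `f` is constant on it.
-/

open Set Filter Topology
open scoped Manifold

theorem apply_eq_of_eventually_eq_on_fiber {X Y Z : Type*} [TopologicalSpace X]
    {q : X → Y} {f : X → Z} (hloc : ∀ a, ∀ᶠ z in 𝓝 a, q z = q a → f z = f a)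
    {x y : X} (hxy : q x = q y) (hfib : IsPreconnected (q ⁻¹' {q y})) : f x = f y := by
  have : PreconnectedSpace (q ⁻¹' {q y}) := Subtype.preconnectedSpace hfib
  have hlc : IsLocallyConstant fun z : q ⁻¹' {q y} ↦ f z := by
    refine (IsLocallyConstant.iff_exists_open _).2 fun ⟨z, hz⟩ ↦ ?_
    obtain ⟨U, hUsub, hUo, hzU⟩ := mem_nhds_iff.1 (hloc z)
    exact ⟨Subtype.val ⁻¹' U, hUo.preimage continuous_subtype_val, hzU,
      fun w hwU ↦ hUsub hwU (w.2.trans hz.symm)⟩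
  exact hlc.apply_eq_of_preconnectedSpace ⟨x, hxy⟩ ⟨y, rfl⟩

namespace ImplicitFunctionData

variable {𝕜 : Type*} [RCLike 𝕜] {E : Type*} [NormedAddCommGroup E]
  [NormedSpace 𝕜 E] [CompleteSpace E] {F : Type*} [NormedAddCommGroup F] [NormedSpace 𝕜 F]
  [CompleteSpace F] {G : Type*} [NormedAddCommGroup G] [NormedSpace 𝕜 G] [CompleteSpace G]
  (φ : ImplicitFunctionData 𝕜 E F G)

theorem exists_ball_implicitFunction_levelSet (hl : ContDiffAt 𝕜 1 φ.leftFun φ.pt)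
    (hr : ContDiffAt 𝕜 1 φ.rightFun φ.pt) {O : Set E} (hO : O ∈ 𝓝 φ.pt) :
    ∃ r > 0, (∀ k ∈ Metric.ball (φ.rightFun φ.pt) r,
      DifferentiableAt 𝕜 (φ.implicitFunction (φ.leftFun φ.pt)) k ∧
      φ.implicitFunction (φ.leftFun φ.pt) k ∈ O ∧
      φ.leftFun (φ.implicitFunction (φ.leftFun φ.pt) k) = φ.leftFun φ.pt) ∧
      ∀ᶠ x in 𝓝 φ.pt, φ.leftFun x = φ.leftFun φ.pt →
        x ∈ φ.implicitFunction (φ.leftFun φ.pt) '' Metric.ball (φ.rightFun φ.pt) r := by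
  set g := φ.implicitFunction (φ.leftFun φ.pt)
  have hslice :
      Tendsto (fun k ↦ (φ.leftFun φ.pt, k)) (𝓝 (φ.rightFun φ.pt)) (𝓝 (φ.prodFun φ.pt)) :=
    (continuous_const.prodMk continuous_id).tendsto' _ _ rfl
  have hg : ContDiffAt 𝕜 1 g (φ.rightFun φ.pt) :=
    (φ.contDiffAt_implicitFunction hl hr one_ne_zero).comp (φ.rightFun φ.pt)
      (f := fun k ↦ (φ.leftFun φ.pt, k)) (contDiffAt_const.prodMk contDiffAt_id)
  have hg_pt : g (φ.rightFun φ.pt) = φ.pt := φ.implicitFunction_apply_image.self_of_nhds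
  have hgood : ∀ᶠ k in 𝓝 (φ.rightFun φ.pt),
      DifferentiableAt 𝕜 g k ∧ g k ∈ O ∧ φ.leftFun (g k) = φ.leftFun φ.pt := by
    filter_upwards [(hg.eventually (by simp)).mono fun k hk ↦ hk.differentiableAt one_ne_zero,
      hg.continuousAt.preimage_mem_nhds (hg_pt ▸ hO),
      hslice.eventually φ.leftFun_implicitFunction] with k hdiff hkO hlev
    exact ⟨hdiff, hkO, hlev⟩
  obtain ⟨r, hr0, hball⟩ := Metric.eventually_nhds_iff_ball.1 hgood
  refine ⟨r, hr0, hball, ?_⟩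
  filter_upwards [φ.leftFun_eq_iff_implicitFunction,
    hr.continuousAt.preimage_mem_nhds (Metric.ball_mem_nhds _ hr0)] with x hiff hx hlev
  exact ⟨_, hx, hiff.1 hlev⟩

end ImplicitFunctionData

section Manifold

variable
  {EM : Type*} [NormedAddCommGroup EM] [NormedSpace ℝ EM]
  {HM : Type*} [TopologicalSpace HM] {I : ModelWithCorners ℝ EM HM}
  {M : Type*} [TopologicalSpace M] [ChartedSpace HM M]
  {EN : Type*} [NormedAddCommGroup EN] [NormedSpace ℝ EN]
  {HN : Type*} [TopologicalSpace HN] {I' : ModelWithCorners ℝ EN HN}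
  {N : Type*} [TopologicalSpace N] [ChartedSpace HN N]
  {F : Type*} [NormedAddCommGroup F] [NormedSpace ℝ F]
  {G : Type*} [NormedAddCommGroup G] [NormedSpace ℝ G]

theorem IsOpen.apply_eq_of_mapsTo_fiber {B : Set G} (hBo : IsOpen B) (hBc : IsPreconnected B)
    {q : M → N} (hq : MDifferentiable I I' q) {f : M → F} (hf : MDifferentiable I 𝓘(ℝ, F) f)
    (hinv : ∀ (x : M) (v : TangentSpace I x),
      mfderiv I I' q x v = 0 → mfderiv I 𝓘(ℝ, F) f x v = 0)
    {c : G → M} (hc : MDifferentiableOn 𝓘(ℝ, G) I c B) {y : N} (hcB : MapsTo c B (q ⁻¹' {y}))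
    {k k' : G} (hk : k ∈ B) (hk' : k' ∈ B) : f (c k) = f (c k') := by
  have hcd : ∀ k ∈ B, MDifferentiableAt 𝓘(ℝ, G) I c k := fun k hk ↦
    hc.mdifferentiableAt (hBo.mem_nhds hk)
  refine hBo.is_const_of_fderiv_eq_zero hBc (f := f ∘ c)
    (fun k hk ↦ ((hf _).comp k (hcd k hk)).differentiableAt.differentiableWithinAt) ?_ hk hk'
  intro k hk
  have hqc : mfderiv 𝓘(ℝ, G) I' (q ∘ c) k = 0 := by
    have hconst : q ∘ c =ᶠ[𝓝 k] fun _ ↦ y :=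
      eventuallyEq_of_mem (hBo.mem_nhds hk) fun _ hk ↦ hcB hk
    rw [hconst.mfderiv_eq]
    exact mfderiv_const
  rw [Pi.zero_apply, ← mfderiv_eq_fderiv, mfderiv_comp k (hf _) (hcd k hk)]
  ext v
  exact hinv _ _ (DFunLike.congr_fun ((mfderiv_comp k (hq _) (hcd k hk)).symm.trans hqc) v)

section Submersion

variable [CompleteSpace EM] [FiniteDimensional ℝ EN] [I.Boundaryless] [IsManifold I 1 M]

theorem exists_mdifferentiableOn_param_fiber {q : M → N} {a : M} (hq : ContMDiffAt I I' 1 q a)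
    (hsurj : Function.Surjective (mfderiv I I' q a)) :
    ∃ (K : Submodule ℝ EM) (c : K → M) (B : Set K), IsOpen B ∧ IsPreconnected B ∧
      MDifferentiableOn 𝓘(ℝ, K) I c B ∧ MapsTo c B (q ⁻¹' {q a}) ∧
      ∀ᶠ z in 𝓝 a, q z = q a → z ∈ c '' B := by
  set e := extChartAt I a
  set e' := extChartAt I' (q a)
  set Q := writtenInExtChartAt I I' a q
  have hQ : ContDiffAt ℝ 1 Q (e a) := by
    have h := (contMDiffAt_iff.1 hq).2
    rwa [I.range_eq_univ, contDiffWithinAt_univ] at h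
  have hD : (fderiv ℝ Q (e a)).range = ⊤ := by
    have h := (hq.mdifferentiableAt one_ne_zero).mfderiv
    rw [I.range_eq_univ, fderivWithin_univ] at h
    exact LinearMap.range_eq_top.2 (h ▸ hsurj)
  let φ := (hQ.hasStrictFDerivAt one_ne_zero).implicitFunctionDataOfComplemented Q _ hD
    (ContinuousLinearMap.ker_closedComplemented_of_finiteDimensional_range _)
  have hr : ContDiffAt ℝ 1 φ.rightFun φ.pt := by
    simp only [φ, HasStrictFDerivAt.implicitFunctionDataOfComplemented]
    fun_prop
  have hO : e.target ∩ e.symm ⁻¹' (q ⁻¹' e'.source) ∈ 𝓝 (e a) := by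
    refine inter_mem (extChartAt_target_mem_nhds a) ?_
    exact (hq.continuousAt.comp_of_eq (continuousAt_extChartAt_symm a) (extChartAt_to_inv a))
      |>.preimage_mem_nhds (by
        rw [Function.comp_apply, extChartAt_to_inv]; exact extChartAt_source_mem_nhds (q a))
  have hQe : ∀ z ∈ e.source, Q (e z) = e' (q z) := fun z hz ↦
    congrArg (e' ∘ q) (e.left_inv hz)
  obtain ⟨r, hr0, hball, hfiber⟩ := φ.exists_ball_implicitFunction_levelSet hQ hr hO
  refine ⟨_, e.symm ∘ φ.implicitFunction (φ.leftFun φ.pt),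
    Metric.ball (φ.rightFun φ.pt) r, Metric.isOpen_ball,
    (convex_ball _ _).isPreconnected, fun k hk ↦ ?_, fun k hk ↦ ?_, ?_⟩
  · obtain ⟨hdiff, ⟨he, -⟩, -⟩ := hball k hk
    exact ((mdifferentiableOn_extChartAt_symm _ he).mdifferentiableAt
      (extChartAt_target_mem_nhds' he)).comp k hdiff.mdifferentiableAt
      |>.mdifferentiableWithinAt
  · obtain ⟨-, ⟨-, hsrc⟩, hlev⟩ := hball k hk
    exact e'.injOn hsrc (mem_extChartAt_source (q a))
      (hlev.trans (hQe a (mem_extChartAt_source a)))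
  · filter_upwards [extChartAt_source_mem_nhds (I := I) a,
      (continuousAt_extChartAt a).eventually hfiber] with z hz hzfib hqz
    obtain ⟨k, hk, hgk⟩ :=
      hzfib ((hQe z hz).trans (hqz ▸ (hQe a (mem_extChartAt_source a)).symm))
    exact ⟨k, hk, by rw [Function.comp_apply, hgk, e.left_inv hz]⟩

theorem eventually_apply_eq_of_mfderiv_ker {q : M → N} (hq : ContMDiff I I' 1 q)
    {f : M → F} (hf : MDifferentiable I 𝓘(ℝ, F) f)
    (hinv : ∀ (x : M) (v : TangentSpace I x),
      mfderiv I I' q x v = 0 → mfderiv I 𝓘(ℝ, F) f x v = 0)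
    {a : M} (hsurj : Function.Surjective (mfderiv I I' q a)) :
    ∀ᶠ z in 𝓝 a, q z = q a → f z = f a := by
  obtain ⟨K, c, B, hBo, hBc, hc, hcB, hfib⟩ := exists_mdifferentiableOn_param_fiber (hq a) hsurj
  obtain ⟨k₀, hk₀, rfl⟩ := hfib.self_of_nhds rfl
  filter_upwards [hfib] with z hz hqz
  obtain ⟨k, hk, rfl⟩ := hz hqz
  exact hBo.apply_eq_of_mapsTo_fiber hBc (hq.mdifferentiable one_ne_zero) hf hinv hc hcB hk hk₀

end Submersion

end Manifold

theorem statement15_general {EM : Type*} [NormedAddCommGroup EM] [NormedSpace ℝ EM]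
    [FiniteDimensional ℝ EM]
    {HM : Type*} [TopologicalSpace HM] {I : ModelWithCorners ℝ EM HM} [I.Boundaryless]
    {M : Type*} [TopologicalSpace M] [ChartedSpace HM M] [IsManifold I (⊤ : ℕ∞) M]
    {EN : Type*} [NormedAddCommGroup EN] [NormedSpace ℝ EN] [FiniteDimensional ℝ EN]
    {HN : Type*} [TopologicalSpace HN] {I' : ModelWithCorners ℝ EN HN}
    {N : Type*} [TopologicalSpace N] [ChartedSpace HN N]
    (q : M → N) (hq : ContMDiff I I' (⊤ : ℕ∞) q)
    (hsub : ∀ x : M, Function.Surjective (mfderiv I I' q x))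
    (hfib : ∀ y : N, IsPreconnected (q ⁻¹' {y}))
    (f : M → ℝ) (hf : ContMDiff I 𝓘(ℝ, ℝ) (⊤ : ℕ∞) f)
    (hinv : ∀ (x : M) (v : TangentSpace I x),
      mfderiv I I' q x v = 0 → mfderiv I 𝓘(ℝ, ℝ) f x v = 0) :
    ∀ x y : M, q x = q y → f x = f y := by
  have : CompleteSpace EM := FiniteDimensional.complete ℝ EM
  intro x y hxy
  refine apply_eq_of_eventually_eq_on_fiber (fun a ↦ ?_) hxy (hfib (q y))
  exact eventually_apply_eq_of_mfderiv_ker (hq.of_le (by simp)) (hf.mdifferentiable (by simp)) hinv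
    (hsub a)

/-- let `q : M → N` be a smooth submersion between smooth
finite-dimensional boundaryless manifolds whose fibers `q⁻¹{y}` are connected, and let
`f : M → ℝ` be a smooth function with `(mfderiv f x)(v) = 0` for every
`v ∈ ker(mfderiv q x)`.  Then `f` is constant along the fibers of `q`. -/
theorem statement15 {EM : Type*} [NormedAddCommGroup EM] [NormedSpace ℝ EM]
    [FiniteDimensional ℝ EM]
    {HM : Type*} [TopologicalSpace HM] {I : ModelWithCorners ℝ EM HM} [I.Boundaryless]
    {M : Type*} [TopologicalSpace M] [ChartedSpace HM M] [IsManifold I (⊤ : ℕ∞) M]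
    {EN : Type*} [NormedAddCommGroup EN] [NormedSpace ℝ EN] [FiniteDimensional ℝ EN]
    {HN : Type*} [TopologicalSpace HN] {I' : ModelWithCorners ℝ EN HN} [I'.Boundaryless]
    {N : Type*} [TopologicalSpace N] [ChartedSpace HN N] [IsManifold I' (⊤ : ℕ∞) N]
    (q : M → N) (hq : ContMDiff I I' (⊤ : ℕ∞) q)
    (hsub : ∀ x : M, Function.Surjective (mfderiv I I' q x))
    (hfib : ∀ y : N, IsPreconnected (q ⁻¹' {y}))
    (f : M → ℝ) (hf : ContMDiff I 𝓘(ℝ, ℝ) (⊤ : ℕ∞) f)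
    (hinv : ∀ (x : M) (v : TangentSpace I x),
      mfderiv I I' q x v = 0 → mfderiv I 𝓘(ℝ, ℝ) f x v = 0) :
    ∀ x y : M, q x = q y → f x = f y :=
  statement15_general q hq hsub hfib f hf hinv
end

section
/- Let M and N be smooth finite-dimensional manifolds (without boundary, modeled on finite-dimensional real normed spaces with models with corners I and I′), and let q : M → N be a smooth surjective map which is a submersion (mfderiv I I′ q x is surjective for every x ∈ M) and whose fibers q⁻¹{y} are connected for every y ∈ N. Let f : M → ℝ be a smooth function such that (mfderiv I 𝓘(ℝ,ℝ) f x)(v) = 0 for every x ∈ M and every v ∈ ker(mfderiv I I′ q x). Then there exists a smooth function f̃ : N → ℝ such that f = f̃ ∘ q. -/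
/-!
In charts, the implicit function theorem straightens the submersion `q` near any point:
it gives a smooth parametrization of the nearby part of the fiber by an open subset of
`ker (dq)`, and a smooth local section of `q`. Since `df` vanishes on `ker (dq)`, the
derivative of `f` along that parametrization is zero, so `f` is locally constant on each fiber,
hence constant on the preconnected fibers. Thus `f = f̃ ∘ q` as maps, and `f̃` is smooth since
near any point it coincides with `f ∘ s` for a smooth local section `s`.
-/

open Set Filter Topology Function
open scoped Manifold

section VectorSpace

variable {E F G : Type*} [NormedAddCommGroup E] [NormedSpace ℝ E]
  [NormedAddCommGroup F] [NormedSpace ℝ F] [NormedAddCommGroup G] [NormedSpace ℝ G]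

theorem eventually_eq_of_eventually_fderiv_eq_zero {f : E → G} {x : E}
    (hf : ∀ᶠ y in 𝓝 x, DifferentiableAt ℝ f y) (hf' : ∀ᶠ y in 𝓝 x, fderiv ℝ f y = 0) :
    ∀ᶠ y in 𝓝 x, f y = f x := by
  set s := interior {y | DifferentiableAt ℝ f y ∧ fderiv ℝ f y = 0}
  have hxs : s ∈ 𝓝 x := interior_mem_nhds.2 (hf.and hf')
  have hs : s ⊆ {y | DifferentiableAt ℝ f y ∧ fderiv ℝ f y = 0} := interior_subset
  have hopen := isOpen_interior.isOpen_inter_preimage_of_fderiv_eq_zero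
    (fun y hy ↦ (hs hy).1.differentiableWithinAt) (fun y hy ↦ (hs hy).2) {f x}
  exact mem_of_superset (hopen.mem_nhds ⟨mem_of_mem_nhds hxs, rfl⟩) fun y hy ↦ hy.2

theorem fderiv_comp_eq_zero_of_ker_le {K : Type*} [NormedAddCommGroup K] [NormedSpace ℝ K]
    {Q : E → F} {g : E → G} {γ : K → E} {k : K} (hγ : DifferentiableAt ℝ γ k)
    (hQ : DifferentiableAt ℝ Q (γ k)) (hg : DifferentiableAt ℝ g (γ k))
    (hQγ : ∀ᶠ k' in 𝓝 k, Q (γ k') = Q (γ k))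
    (hker : ∀ w, fderiv ℝ Q (γ k) w = 0 → fderiv ℝ g (γ k) w = 0) :
    fderiv ℝ (g ∘ γ) k = 0 := by
  have hvert : (fderiv ℝ Q (γ k)).comp (fderiv ℝ γ k) = 0 := by
    have hQγ' : Q ∘ γ =ᶠ[𝓝 k] fun _ ↦ Q (γ k) := hQγ
    rw [← fderiv_comp k hQ hγ, hQγ'.fderiv_eq, fderiv_const_apply]
  ext w
  rw [fderiv_comp k hg hγ]
  exact hker _ (DFunLike.congr_fun hvert w)

variable [CompleteSpace E] [FiniteDimensional ℝ F] {Q : E → F} {u₀ : E} {n : WithTop ℕ∞}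

noncomputable def ContDiffAt.implicitFunctionDataOfSurjective (hQ : ContDiffAt ℝ n Q u₀)
    (hn : n ≠ 0) (hsurj : Surjective (fderiv ℝ Q u₀)) :
    ImplicitFunctionData ℝ E F (fderiv ℝ Q u₀ : E →ₗ[ℝ] F).ker :=
  (hQ.hasStrictFDerivAt hn).implicitFunctionDataOfComplemented Q (fderiv ℝ Q u₀)
    (LinearMap.range_eq_top.2 hsurj)
    (fderiv ℝ Q u₀).ker_closedComplemented_of_finiteDimensional_range

theorem ContDiffAt.contDiffAt_implicitFunction_of_surjective (hQ : ContDiffAt ℝ n Q u₀)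
    (hn : n ≠ 0) (hsurj : Surjective (fderiv ℝ Q u₀)) :
    letI φ := hQ.implicitFunctionDataOfSurjective hn hsurj
    ContDiffAt ℝ n φ.implicitFunction.uncurry (φ.prodFun φ.pt) :=
  ImplicitFunctionData.contDiffAt_implicitFunction hQ
    ((ContinuousLinearMap.contDiff _).comp (contDiff_id.sub contDiff_const)).contDiffAt hn

theorem ContDiffAt.exists_local_section (hQ : ContDiffAt ℝ n Q u₀) (hn : n ≠ 0)
    (hsurj : Surjective (fderiv ℝ Q u₀)) :
    ∃ S : F → E, S (Q u₀) = u₀ ∧ ContDiffAt ℝ n S (Q u₀) ∧ ∀ᶠ y in 𝓝 (Q u₀), Q (S y) = y := by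
  set φ := hQ.implicitFunctionDataOfSurjective hn hsurj
  have hslice : ContinuousAt (fun y ↦ (y, φ.rightFun φ.pt)) (Q u₀) := by fun_prop
  refine ⟨fun y ↦ φ.implicitFunction y (φ.rightFun φ.pt),
    φ.implicitFunction_apply_image.self_of_nhds, ?_, hslice.eventually φ.leftFun_implicitFunction⟩
  exact (hQ.contDiffAt_implicitFunction_of_surjective hn hsurj).comp (Q u₀)
    (contDiffAt_id.prodMk contDiffAt_const)

theorem ContDiffAt.eventually_eq_on_fiber_of_ker_fderiv_le {g : E → G} (hQ : ContDiffAt ℝ 1 Q u₀)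
    (hsurj : Surjective (fderiv ℝ Q u₀)) (hg : ContDiffAt ℝ 1 g u₀)
    (hker : ∀ᶠ u in 𝓝 u₀, ∀ w, fderiv ℝ Q u w = 0 → fderiv ℝ g u w = 0) :
    ∀ᶠ u in 𝓝 u₀, Q u = Q u₀ → g u = g u₀ := by
  have hQdiff : ∀ᶠ u in 𝓝 u₀, DifferentiableAt ℝ Q u :=
    (hQ.eventually (by simp)).mono fun u hu ↦ hu.differentiableAt one_ne_zero
  have hgdiff : ∀ᶠ u in 𝓝 u₀, DifferentiableAt ℝ g u :=
    (hg.eventually (by simp)).mono fun u hu ↦ hu.differentiableAt one_ne_zero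
  set φ := hQ.implicitFunctionDataOfSurjective one_ne_zero hsurj
  set γ := φ.implicitFunction (Q u₀)
  set r₀ := φ.rightFun u₀
  -- `γ` parametrizes the level set `Q ⁻¹' {Q u₀}` near `u₀` by the coordinate `φ.rightFun`.
  have hγ : ContDiffAt ℝ 1 γ r₀ :=
    (hQ.contDiffAt_implicitFunction_of_surjective one_ne_zero hsurj).comp r₀
      (contDiffAt_const.prodMk contDiffAt_id)
  have hγr₀ : γ r₀ = u₀ := φ.implicitFunction_apply_image.self_of_nhds
  have hγQ : ∀ᶠ k in 𝓝 r₀, Q (γ k) = Q u₀ := by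
    have hslice : ContinuousAt (fun k ↦ (Q u₀, k)) r₀ := by fun_prop
    exact hslice.eventually φ.leftFun_implicitFunction
  have hγu₀ : Tendsto γ (𝓝 r₀) (𝓝 u₀) := by
    simpa only [hγr₀] using hγ.continuousAt.tendsto
  have hγdiff : ∀ᶠ k in 𝓝 r₀, DifferentiableAt ℝ γ k := by
    filter_upwards [hγ.eventually (by simp)] with k hk using hk.differentiableAt one_ne_zero
  have hderiv : ∀ᶠ k in 𝓝 r₀, fderiv ℝ (g ∘ γ) k = 0 := by
    filter_upwards [hγdiff, hγQ, hγQ.eventually_nhds, hγu₀.eventually hker,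
      hγu₀.eventually hgdiff, hγu₀.eventually hQdiff] with k hγk hQk hQγ hkerk hgk hQdk
    exact fderiv_comp_eq_zero_of_ker_le hγk hQdk hgk (hQk ▸ hQγ) hkerk
  have hgγdiff : ∀ᶠ k in 𝓝 r₀, DifferentiableAt ℝ (g ∘ γ) k := by
    filter_upwards [hγdiff, hγu₀.eventually hgdiff] with k hγk hgk using hgk.comp k hγk
  have hconst := eventually_eq_of_eventually_fderiv_eq_zero hgγdiff hderiv
  have hρ : Tendsto φ.rightFun (𝓝 u₀) (𝓝 r₀) := φ.hasStrictFDerivAt_rightFun.continuousAt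
  filter_upwards [φ.leftFun_eq_iff_implicitFunction, hρ.eventually hconst] with u hiff hu hQu
  calc g u = g (γ (φ.rightFun u)) := congrArg g (hiff.1 hQu).symm
    _ = g u₀ := hu.trans (congrArg g hγr₀)

end VectorSpace

section Manifold

variable {EM : Type*} [NormedAddCommGroup EM] [NormedSpace ℝ EM]
  {HM : Type*} [TopologicalSpace HM] {I : ModelWithCorners ℝ EM HM}
  {M : Type*} [TopologicalSpace M] [ChartedSpace HM M]
  {EN : Type*} [NormedAddCommGroup EN] [NormedSpace ℝ EN]
  {HN : Type*} [TopologicalSpace HN] {I' : ModelWithCorners ℝ EN HN}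
  {N : Type*} [TopologicalSpace N] [ChartedSpace HN N]
  {q : M → N} {x : M}

theorem ContinuousAt.eventually_apply_extChartAt_symm_mem_source (hq : ContinuousAt q x) :
    ∀ᶠ u in 𝓝 (extChartAt I x x), q ((extChartAt I x).symm u) ∈ (extChartAt I' (q x)).source := by
  have hφ : Tendsto (extChartAt I x).symm (𝓝 (extChartAt I x x)) (𝓝 x) := by
    simpa only [extChartAt_to_inv] using (continuousAt_extChartAt_symm (I := I) x).tendsto
  exact (hq.tendsto.comp hφ).eventually (extChartAt_source_mem_nhds (I := I') (q x))

variable [I.Boundaryless]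

theorem ContMDiffAt.contDiffAt_writtenInExtChartAt {n : WithTop ℕ∞} (hq : ContMDiffAt I I' n q x) :
    ContDiffAt ℝ n (writtenInExtChartAt I I' x q) (extChartAt I x x) := by
  have := (contMDiffAt_iff.1 hq).2
  rwa [I.range_eq_univ, contDiffWithinAt_univ] at this

section

variable [IsManifold I 1 M] [IsManifold I' 1 N]

theorem fderiv_writtenInExtChartAt {y : M} (hy : y ∈ (extChartAt I x).source)
    (hqy : q y ∈ (extChartAt I' (q x)).source) (hq : MDifferentiableAt I I' q y) :
    fderiv ℝ (writtenInExtChartAt I I' x q) (extChartAt I x y) =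
      (mfderiv I' 𝓘(ℝ, EN) (extChartAt I' (q x)) (q y)).comp ((mfderiv I I' q y).comp
        (mfderiv 𝓘(ℝ, EM) I (extChartAt I x).symm (extChartAt I x y))) := by
  have hinv : (extChartAt I x).symm (extChartAt I x y) = y := (extChartAt I x).left_inv hy
  have hφ : MDifferentiableAt 𝓘(ℝ, EM) I (extChartAt I x).symm (extChartAt I x y) := by
    have := mdifferentiableWithinAt_extChartAt_symm ((extChartAt I x).map_source hy)
    rwa [I.range_eq_univ, mdifferentiableWithinAt_univ] at this
  have hψ : MDifferentiableAt I' 𝓘(ℝ, EN) (extChartAt I' (q x))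
      (q ((extChartAt I x).symm (extChartAt I x y))) := by
    rw [hinv]; exact mdifferentiableAt_extChartAt (by rwa [← extChartAt_source I'])
  rw [← hinv] at hq
  rw [← mfderiv_eq_fderiv, writtenInExtChartAt,
    mfderiv_comp (f := q ∘ (extChartAt I x).symm) _ hψ (hq.comp _ hφ),
    mfderiv_comp _ hq hφ, comp_apply, hinv]

theorem surjective_fderiv_writtenInExtChartAt (hq : MDifferentiableAt I I' q x)
    (hsurj : Surjective (mfderiv I I' q x)) :
    Surjective (fderiv ℝ (writtenInExtChartAt I I' x q) (extChartAt I x x)) := by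
  rw [fderiv_writtenInExtChartAt (mem_extChartAt_source x) (mem_extChartAt_source (q x)) hq]
  obtain ⟨eψ, hψ⟩ := isInvertible_mfderiv_extChartAt (I := I') (mem_extChartAt_source (q x))
  obtain ⟨eφ, hφ⟩ := isInvertible_mfderivWithin_extChartAt_symm (mem_extChartAt_target (I := I) x)
  rw [I.range_eq_univ, mfderivWithin_univ] at hφ
  rw [← hψ, ← hφ]
  exact eψ.surjective.comp (hsurj.comp eφ.surjective)

theorem eventually_eq_on_fiber_of_ker_mfderiv_le [CompleteSpace EM] [FiniteDimensional ℝ EN]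
    {G : Type*} [NormedAddCommGroup G] [NormedSpace ℝ G] {f : M → G}
    (hq : ContMDiff I I' 1 q) (hf : ContMDiff I 𝓘(ℝ, G) 1 f) (hsurj : Surjective (mfderiv I I' q x))
    (hker : ∀ (y : M) (v : TangentSpace I y),
      mfderiv I I' q y v = 0 → mfderiv I 𝓘(ℝ, G) f y v = 0) :
    ∀ᶠ y in 𝓝 x, q y = q x → f y = f x := by
  have hkerQ : ∀ᶠ u in 𝓝 (extChartAt I x x), ∀ w,
      fderiv ℝ (writtenInExtChartAt I I' x q) u w = 0 →
        fderiv ℝ (writtenInExtChartAt I 𝓘(ℝ, G) x f) u w = 0 := by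
    rw [← map_extChartAt_nhds_of_boundaryless (I := I), eventually_map]
    filter_upwards [extChartAt_source_mem_nhds (I := I) x, hq.continuous.continuousAt.eventually
      (extChartAt_source_mem_nhds (I := I') (q x))] with y hy hqy w hw
    rw [fderiv_writtenInExtChartAt hy hqy ((hq y).mdifferentiableAt one_ne_zero)] at hw
    rw [fderiv_writtenInExtChartAt hy (by rw [extChartAt_model_space_eq_id]; trivial)
      ((hf y).mdifferentiableAt one_ne_zero)]
    have := hker y _ ((isInvertible_mfderiv_extChartAt hqy).injective (hw.trans (map_zero _).symm))
    exact (congrArg (mfderiv 𝓘(ℝ, G) 𝓘(ℝ, G) (extChartAt 𝓘(ℝ, G) (f x)) (f y)) this).trans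
      (map_zero _)
  have key := (hq x).contDiffAt_writtenInExtChartAt.eventually_eq_on_fiber_of_ker_fderiv_le
    (surjective_fderiv_writtenInExtChartAt ((hq x).mdifferentiableAt one_ne_zero) hsurj)
    (hf x).contDiffAt_writtenInExtChartAt hkerQ
  rw [← map_extChartAt_nhds_of_boundaryless, eventually_map] at key
  filter_upwards [key, extChartAt_source_mem_nhds (I := I) x] with y hy hys hqy
  simp only [writtenInExtChartAt, comp_apply, (extChartAt I x).left_inv hys, extChartAt_to_inv,
    hqy, extChartAt_model_space_eq_id, PartialEquiv.refl_coe, id_eq] at hy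
  exact hy trivial

end

theorem ContMDiffAt.exists_local_section [CompleteSpace EM] [FiniteDimensional ℝ EN]
    {n : WithTop ℕ∞} [IsManifold I n M] [IsManifold I' n N]
    (hq : ContMDiffAt I I' n q x) (hn : 1 ≤ n) (hsurj : Surjective (mfderiv I I' q x)) :
    ∃ s : N → M, ContMDiffAt I' I n s (q x) ∧ ∀ᶠ z in 𝓝 (q x), q (s z) = z := by
  have : IsManifold I 1 M := .of_le hn
  have : IsManifold I' 1 N := .of_le hn
  have hn₀ : n ≠ 0 := by positivity
  obtain ⟨S, hS₀, hS, hQS⟩ := hq.contDiffAt_writtenInExtChartAt.exists_local_section hn₀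
    (surjective_fderiv_writtenInExtChartAt (hq.mdifferentiableAt hn₀) hsurj)
  have hQ₀ : writtenInExtChartAt I I' x q (extChartAt I x x) = extChartAt I' (q x) (q x) := by
    simp only [writtenInExtChartAt, comp_apply, extChartAt_to_inv]
  rw [hQ₀] at hS₀ hS hQS
  have hψ : Tendsto (extChartAt I' (q x)) (𝓝 (q x)) (𝓝 (extChartAt I' (q x) (q x))) :=
    continuousAt_extChartAt (I := I') (q x)
  have hSψ : Tendsto (S ∘ extChartAt I' (q x)) (𝓝 (q x)) (𝓝 (extChartAt I x x)) :=
    hS₀ ▸ hS.continuousAt.tendsto.comp hψ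
  refine ⟨(extChartAt I x).symm ∘ S ∘ extChartAt I' (q x), ?_, ?_⟩
  · have hφ : ContMDiffAt 𝓘(ℝ, EM) I n (extChartAt I x).symm (S (extChartAt I' (q x) (q x))) := by
      rw [hS₀]; exact (contMDiffOn_extChartAt_symm x).contMDiffAt (extChartAt_target_mem_nhds x)
    exact hφ.comp (q x) (hS.contMDiffAt.comp (q x) contMDiffAt_extChartAt)
  · filter_upwards [extChartAt_source_mem_nhds (I := I') (q x), hψ.eventually hQS,
      hSψ.eventually (hq.continuousAt.eventually_apply_extChartAt_symm_mem_source (I := I)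
        (I' := I'))] with z hz hQz hgood
    exact (extChartAt I' (q x)).injOn hgood hz hQz

end Manifold

theorem apply_eq_of_isPreconnected_fiber {X Y Z : Type*} [TopologicalSpace X] {q : X → Y}
    {f : X → Z} (hloc : ∀ x, ∀ᶠ y in 𝓝 x, q y = q x → f y = f x) {a b : X}
    (hfib : IsPreconnected (q ⁻¹' {q a})) (hab : q a = q b) : f a = f b := by
  have := Subtype.preconnectedSpace hfib
  have hlc : IsLocallyConstant fun p : q ⁻¹' {q a} ↦ f p := by
    refine (IsLocallyConstant.iff_eventually_eq _).2 fun p ↦ ?_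
    filter_upwards [continuous_subtype_val.continuousAt.eventually (hloc p)] with r hr
    exact hr (r.2.trans p.2.symm)
  exact hlc.apply_eq_of_preconnectedSpace ⟨a, rfl⟩ ⟨b, hab.symm⟩

theorem statement16_general {EM : Type*} [NormedAddCommGroup EM] [NormedSpace ℝ EM]
    [FiniteDimensional ℝ EM]
    {HM : Type*} [TopologicalSpace HM] {I : ModelWithCorners ℝ EM HM} [I.Boundaryless]
    {M : Type*} [TopologicalSpace M] [ChartedSpace HM M] [IsManifold I (⊤ : ℕ∞) M]
    {EN : Type*} [NormedAddCommGroup EN] [NormedSpace ℝ EN] [FiniteDimensional ℝ EN]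
    {HN : Type*} [TopologicalSpace HN] {I' : ModelWithCorners ℝ EN HN}
    {N : Type*} [TopologicalSpace N] [ChartedSpace HN N] [IsManifold I' (⊤ : ℕ∞) N]
    (q : M → N) (hq : ContMDiff I I' (⊤ : ℕ∞) q) (hqsurj : Function.Surjective q)
    (hsub : ∀ x : M, Function.Surjective (mfderiv I I' q x))
    (hfib : ∀ y : N, IsPreconnected (q ⁻¹' {y}))
    (f : M → ℝ) (hf : ContMDiff I 𝓘(ℝ, ℝ) (⊤ : ℕ∞) f)
    (hinv : ∀ (x : M) (v : TangentSpace I x),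
      mfderiv I I' q x v = 0 → mfderiv I 𝓘(ℝ, ℝ) f x v = 0) :
    ∃ ft : N → ℝ, ContMDiff I' 𝓘(ℝ, ℝ) (⊤ : ℕ∞) ft ∧ f = ft ∘ q := by
  have hone : (1 : WithTop ℕ∞) ≤ (⊤ : ℕ∞) := by simp
  have hconst : ∀ a b, q a = q b → f a = f b := fun a b ↦
    apply_eq_of_isPreconnected_fiber (fun x ↦ eventually_eq_on_fiber_of_ker_mfderiv_le
      (hq.of_le hone) (hf.of_le hone) (hsub x) hinv) (hfib (q a))
  choose sec hsec using hqsurj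
  refine ⟨f ∘ sec, fun y ↦ ?_, funext fun x ↦ hconst _ _ (hsec (q x)).symm⟩
  obtain ⟨s, hs, hqs⟩ := (hq (sec y)).exists_local_section hone (hsub (sec y))
  rw [hsec] at hs hqs
  refine ((hf (s y)).comp y hs).congr_of_eventuallyEq ?_
  filter_upwards [hqs] with z hz using hconst _ _ (by rw [hsec, hz])

/-- let `q : M → N` be a smooth surjective submersion between smooth
finite-dimensional boundaryless manifolds whose fibers `q⁻¹{y}` are connected, and let
`f : M → ℝ` be a smooth function with `(mfderiv f x)(v) = 0` for every
`v ∈ ker(mfderiv q x)`.  Then there is a smooth `f̃ : N → ℝ` with `f = f̃ ∘ q`. -/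
theorem statement16 {EM : Type*} [NormedAddCommGroup EM] [NormedSpace ℝ EM]
    [FiniteDimensional ℝ EM]
    {HM : Type*} [TopologicalSpace HM] {I : ModelWithCorners ℝ EM HM} [I.Boundaryless]
    {M : Type*} [TopologicalSpace M] [ChartedSpace HM M] [IsManifold I (⊤ : ℕ∞) M]
    {EN : Type*} [NormedAddCommGroup EN] [NormedSpace ℝ EN] [FiniteDimensional ℝ EN]
    {HN : Type*} [TopologicalSpace HN] {I' : ModelWithCorners ℝ EN HN} [I'.Boundaryless]
    {N : Type*} [TopologicalSpace N] [ChartedSpace HN N] [IsManifold I' (⊤ : ℕ∞) N]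
    (q : M → N) (hq : ContMDiff I I' (⊤ : ℕ∞) q) (hqsurj : Function.Surjective q)
    (hsub : ∀ x : M, Function.Surjective (mfderiv I I' q x))
    (hfib : ∀ y : N, IsPreconnected (q ⁻¹' {y}))
    (f : M → ℝ) (hf : ContMDiff I 𝓘(ℝ, ℝ) (⊤ : ℕ∞) f)
    (hinv : ∀ (x : M) (v : TangentSpace I x),
      mfderiv I I' q x v = 0 → mfderiv I 𝓘(ℝ, ℝ) f x v = 0) :
    ∃ ft : N → ℝ, ContMDiff I' 𝓘(ℝ, ℝ) (⊤ : ℕ∞) ft ∧ f = ft ∘ q :=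
  statement16_general q hq hqsurj hsub hfib f hf hinv
end
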